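/- arXiv:1910.02209 — 6 statements merged into one kernel-verified Lean document; each statement's English description precedes it below -/
import Mathlib

section
/- Every simple graph on n vertices with more than (k-1)n/2 edges contains a path with k edges. -/
/-!
Induct on a vertex set `s`, measuring its edges by `∑ v ∈ s, degreeIn s v`. A vertex with fewer
than `k/2` neighbours in `s` can be deleted without losing the hypothesis. Otherwise let `P` be a
longest path `a = v₀, …, v_L = b` in `s` and suppose `L < k`. All neighbours of `a` and `b` in
`s` lie on `P`, and there are more than `L` of them in total, so some `b ~ vᵢ` and `a ~ vᵢ₊₁`:
the vertices of `P` then lie on a cycle, and any edge leaving `P` inside `s` would give a longer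
path. So the vertices of `P` span at most `(L + 1) L / 2 ≤ (k - 1)(L + 1) / 2` edges and no edge
to the rest of `s`, and deleting them keeps the hypothesis.
-/

open Finset

namespace SimpleGraph

variable {V : Type*} {G : SimpleGraph V}

section DegreeIn

variable [DecidableRel G.Adj]

variable (G) in
def degreeIn (s : Finset V) (v : V) : ℕ := #{w ∈ s | G.Adj v w}

lemma sum_degreeIn_comm (A B : Finset V) :
    ∑ x ∈ A, G.degreeIn B x = ∑ y ∈ B, G.degreeIn A y := by
  simpa [degreeIn, bipartiteAbove, bipartiteBelow, G.adj_comm] using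
    sum_card_bipartiteAbove_eq_sum_card_bipartiteBelow (s := A) (t := B) (r := G.Adj)

variable [DecidableEq V] {s T : Finset V}

lemma degreeIn_sdiff_add_degreeIn (hT : T ⊆ s) (x : V) :
    G.degreeIn (s \ T) x + G.degreeIn T x = G.degreeIn s x := by
  rw [degreeIn, degreeIn, degreeIn, ← card_union_of_disjoint
    (disjoint_filter_filter sdiff_disjoint), ← filter_union, sdiff_union_of_subset hT]

lemma sum_degreeIn_eq_sum_sdiff_add (hT : T ⊆ s) :
    ∑ x ∈ s, G.degreeIn s x = ∑ x ∈ s \ T, G.degreeIn (s \ T) x +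
      ∑ x ∈ T, G.degreeIn s x + ∑ x ∈ T, G.degreeIn (s \ T) x := by
  calc ∑ x ∈ s, G.degreeIn s x
      = ∑ x ∈ s \ T, (G.degreeIn (s \ T) x + G.degreeIn T x) + ∑ x ∈ T, G.degreeIn s x := by
        rw [← sum_sdiff hT]
        simp only [degreeIn_sdiff_add_degreeIn hT]
    _ = _ := by rw [sum_add_distrib, sum_degreeIn_comm (s \ T) T]; ring

lemma sum_degreeIn_le_sum_erase {v : V} (hv : v ∈ s) :
    ∑ x ∈ s, G.degreeIn s x ≤ ∑ x ∈ s.erase v, G.degreeIn (s.erase v) x + 2 * G.degreeIn s v := by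
  have hmono : G.degreeIn (s \ {v}) v ≤ G.degreeIn s v :=
    card_le_card (filter_subset_filter _ sdiff_subset)
  have := sum_degreeIn_eq_sum_sdiff_add (G := G) (singleton_subset_iff.mpr hv)
  rw [sum_singleton, sum_singleton, sdiff_singleton_eq_erase] at this
  rw [sdiff_singleton_eq_erase] at hmono
  omega

lemma sum_degreeIn_le_sum_sdiff_of_closed (hT : T ⊆ s)
    (hclosed : ∀ x ∈ T, ∀ y ∈ s, G.Adj x y → y ∈ T) :
    ∑ x ∈ s, G.degreeIn s x ≤ ∑ x ∈ s \ T, G.degreeIn (s \ T) x + #T * (#T - 1) := by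
  have hout : ∀ x ∈ T, G.degreeIn (s \ T) x = 0 := fun x hx ↦ by
    simp only [degreeIn, card_eq_zero, filter_eq_empty_iff, mem_sdiff]
    exact fun y ⟨hys, hyT⟩ hxy ↦ hyT (hclosed x hx y hys hxy)
  have hin : ∀ x ∈ T, G.degreeIn s x ≤ #T - 1 := fun x hx ↦ by
    rw [← card_erase_of_mem hx]
    refine card_le_card fun y hy ↦ ?_
    rw [mem_filter] at hy
    exact mem_erase.mpr ⟨hy.2.ne', hclosed x hx y hy.1 hy.2⟩
  rw [sum_degreeIn_eq_sum_sdiff_add hT, sum_eq_zero hout, add_zero]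
  gcongr
  simpa using sum_le_card_nsmul T _ _ hin

end DegreeIn

namespace Walk

variable {a b : V} {P : G.Walk a b}

lemma IsPath.mem_support_of_adj_end_of_forall_length_le {s : Finset V} (hP : P.IsPath)
    (hPs : ∀ x ∈ P.support, x ∈ s)
    (hmax : ∀ (u v : V) (q : G.Walk u v), q.IsPath → (∀ x ∈ q.support, x ∈ s) →
      q.length ≤ P.length)
    {y : V} (hy : y ∈ s) (hby : G.Adj b y) : y ∈ P.support := by
  by_contra hyP
  have := hmax _ _ (P.concat hby) (hP.concat hyP hby)
    (by simpa [or_imp, forall_and] using ⟨hPs, hy⟩)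
  simp at this

variable [DecidableEq V]

lemma IsPath.length_lt_card {s : Finset V} (hP : P.IsPath) (hPs : ∀ x ∈ P.support, x ∈ s) :
    P.length < #s := by
  have hcard : #P.support.toFinset = P.length + 1 := by
    rw [List.toFinset_card_of_nodup hP.support_nodup, length_support]
  have := card_le_card fun x hx ↦ hPs x (List.mem_toFinset.mp hx)
  omega

lemma exists_isPath_perm_support_tail {u x : V} (C : G.Walk u u) (hC : ¬C.Nil)
    (hnodup : C.support.tail.Nodup) (hx : x ∈ C.support) :
    ∃ (w : V) (Q : G.Walk w x), Q.IsPath ∧ Q.support.Perm C.support.tail := by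
  set C' := C.rotate x hx
  have hC' : ¬C'.Nil := by rwa [nil_rotate]
  have hperm : C'.support.tail.Perm C.support.tail := (support_rotate C x hx).perm
  refine ⟨_, C'.tail, .mk' ?_, ?_⟩ <;> rw [support_tail_of_not_nil C' hC']
  · exact hperm.nodup_iff.mpr hnodup
  · exact hperm

lemma IsPath.exists_isPath_perm_support_of_adj_of_adj (hP : P.IsPath) {i : ℕ}
    (hi : i < P.length) (hb : G.Adj b (P.getVert i)) (ha : G.Adj a (P.getVert (i + 1)))
    {x : V} (hx : x ∈ P.support) :
    ∃ (w : V) (Q : G.Walk w x), Q.IsPath ∧ Q.support.Perm P.support := by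
  -- the cycle `b, vᵢ, …, v₀ = a, vᵢ₊₁, …, v_L = b`
  let C : G.Walk b b := cons hb ((P.take i).reverse.append (cons ha (P.drop (i + 1))))
  have hCperm : C.support.tail.Perm P.support := by
    have hmin : (i + 1) ⊓ P.length = i + 1 := min_eq_left hi
    simp only [C, support_cons, List.tail_cons, support_append, support_reverse, support_take,
      drop_support_eq_support_drop_min, hmin]
    exact ((List.reverse_perm _).append_right _).trans (by rw [List.take_append_drop])
  obtain ⟨w, Q, hQ, hQperm⟩ := exists_isPath_perm_support_tail C not_nil_cons
    (hCperm.nodup_iff.mpr hP.support_nodup) (List.mem_of_mem_tail (hCperm.mem_iff.mpr hx))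
  exact ⟨w, Q, hQ, hQperm.trans hCperm⟩

lemma exists_adj_getVert_adj_getVert_succ [DecidableRel G.Adj] {s : Finset V}
    (ha : ∀ y ∈ s, G.Adj a y → y ∈ P.support) (hb : ∀ y ∈ s, G.Adj b y → y ∈ P.support)
    (hlt : P.length < G.degreeIn s a + G.degreeIn s b) :
    ∃ i < P.length, G.Adj b (P.getVert i) ∧ G.Adj a (P.getVert (i + 1)) := by
  set A := {i ∈ range P.length | G.Adj b (P.getVert i)}
  set B := {i ∈ range P.length | G.Adj a (P.getVert (i + 1))}
  have hA : G.degreeIn s b ≤ #A := by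
    refine (card_le_card fun y hy ↦ ?_).trans (card_image_le (f := P.getVert))
    rw [mem_filter] at hy
    obtain ⟨j, rfl, hj⟩ := mem_support_iff_exists_getVert.mp (hb y hy.1 hy.2)
    have hjL : j ≠ P.length := by
      rintro rfl
      exact hy.2.ne (getVert_length P).symm
    exact mem_image.mpr ⟨j, mem_filter.mpr ⟨mem_range.mpr (by omega), hy.2⟩, rfl⟩
  have hB : G.degreeIn s a ≤ #B := by
    refine (card_le_card fun y hy ↦ ?_).trans (card_image_le (f := fun i ↦ P.getVert (i + 1)))
    rw [mem_filter] at hy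
    obtain ⟨j, rfl, hj⟩ := mem_support_iff_exists_getVert.mp (ha y hy.1 hy.2)
    obtain ⟨i, rfl⟩ : ∃ i, j = i + 1 := by
      refine Nat.exists_eq_add_one.mpr (Nat.pos_of_ne_zero ?_)
      rintro rfl
      exact hy.2.ne (getVert_zero P).symm
    exact mem_image.mpr ⟨i, mem_filter.mpr ⟨mem_range.mpr (by omega), hy.2⟩, rfl⟩
  have hunion : #(A ∪ B) ≤ P.length :=
    (card_le_card (union_subset (filter_subset _ _) (filter_subset _ _))).trans (card_range _).le
  obtain ⟨i, hi⟩ : (A ∩ B).Nonempty := by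
    rw [← card_pos]
    have := card_union_add_card_inter A B
    omega
  simp only [A, B, mem_inter, mem_filter, mem_range] at hi
  exact ⟨i, hi.1.1, hi.1.2, hi.2.2⟩

lemma IsPath.mem_support_of_adj_of_forall_length_le [DecidableRel G.Adj] {s : Finset V} {k : ℕ}
    (hdeg : ∀ v ∈ s, k ≤ 2 * G.degreeIn s v) (hP : P.IsPath) (hPs : ∀ x ∈ P.support, x ∈ s)
    (hmax : ∀ (u v : V) (q : G.Walk u v), q.IsPath → (∀ x ∈ q.support, x ∈ s) →
      q.length ≤ P.length)
    (hk : P.length < k) {x y : V} (hx : x ∈ P.support) (hy : y ∈ s) (hxy : G.Adj x y) :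
    y ∈ P.support := by
  have hb : ∀ y ∈ s, G.Adj b y → y ∈ P.support := fun y hy ↦
    hP.mem_support_of_adj_end_of_forall_length_le hPs hmax hy
  have ha : ∀ y ∈ s, G.Adj a y → y ∈ P.support := fun y hy hay ↦ by
    simpa using hP.reverse.mem_support_of_adj_end_of_forall_length_le (by simpa using hPs)
      (by simpa using hmax) hy hay
  have hlt : P.length < G.degreeIn s a + G.degreeIn s b := by
    have := hdeg a (hPs a P.start_mem_support)
    have := hdeg b (hPs b P.end_mem_support)
    omega
  obtain ⟨i, hi, hbi, hai⟩ := exists_adj_getVert_adj_getVert_succ ha hb hlt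
  obtain ⟨w, Q, hQ, hQP⟩ := hP.exists_isPath_perm_support_of_adj_of_adj hi hbi hai hx
  by_contra hyP
  have hQlen : Q.length = P.length := by
    simpa only [length_support, Nat.add_right_cancel_iff] using hQP.length_eq
  have := hmax _ _ (Q.concat hxy) (hQ.concat (hQP.mem_iff.not.mpr hyP) hxy)
    (by simpa [or_imp, forall_and, hQP.mem_iff] using ⟨hPs, hy⟩)
  simp [hQlen] at this

end Walk

variable [DecidableEq V]

lemma exists_isPath_forall_length_le {s : Finset V} (hs : s.Nonempty) :
    ∃ (a b : V) (P : G.Walk a b), P.IsPath ∧ (∀ x ∈ P.support, x ∈ s) ∧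
      ∀ (u v : V) (q : G.Walk u v), q.IsPath → (∀ x ∈ q.support, x ∈ s) → q.length ≤ P.length := by
  let lengths : Set ℕ := {l | ∃ (u v : V) (q : G.Walk u v),
    q.IsPath ∧ (∀ x ∈ q.support, x ∈ s) ∧ q.length = l}
  have hne : lengths.Nonempty := by
    obtain ⟨v, hv⟩ := hs
    exact ⟨0, v, v, .nil, .nil, by simpa using hv, rfl⟩
  have hbdd : BddAbove lengths := by
    refine ⟨#s, ?_⟩
    rintro _ ⟨u, v, q, hq, hqs, rfl⟩
    exact (hq.length_lt_card hqs).le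
  obtain ⟨a, b, P, hP, hPs, hlen⟩ := Nat.sSup_mem hne hbdd
  exact ⟨a, b, P, hP, hPs, fun u v q hq hqs ↦ hlen ▸ le_csSup hbdd ⟨u, v, q, hq, hqs, rfl⟩⟩

theorem exists_isPath_length_eq_of_sum_degreeIn [DecidableRel G.Adj] (k : ℕ) (s : Finset V)
    (h : (k - 1) * #s < ∑ v ∈ s, G.degreeIn s v) :
    ∃ (u v : V) (p : G.Walk u v), p.IsPath ∧ p.length = k ∧ ∀ x ∈ p.support, x ∈ s := by
  induction s using Finset.strongInduction with
  | H s ih =>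
  by_cases hlow : ∃ v ∈ s, 2 * G.degreeIn s v ≤ k - 1
  · obtain ⟨v, hv, hdeg⟩ := hlow
    have hsum := sum_degreeIn_le_sum_erase (G := G) hv
    rw [← card_erase_add_one hv, mul_add_one] at h
    obtain ⟨u, w, p, hp, hlen, hps⟩ := ih _ (erase_ssubset hv) (by omega)
    exact ⟨u, w, p, hp, hlen, fun x hx ↦ mem_of_mem_erase (hps x hx)⟩
  push Not at hlow
  have hdeg : ∀ v ∈ s, k ≤ 2 * G.degreeIn s v := fun v hv ↦ by have := hlow v hv; omega
  have hs : s.Nonempty := nonempty_iff_ne_empty.mpr (by rintro rfl; simp at h)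
  obtain ⟨a, b, P, hP, hPs, hmax⟩ := G.exists_isPath_forall_length_le hs
  rcases le_or_gt k P.length with hkP | hPk
  · refine ⟨_, _, P.drop (P.length - k), hP.drop _, by simp; omega, fun x hx ↦ hPs x ?_⟩
    simp only [Walk.drop_support_eq_support_drop_min] at hx
    exact List.mem_of_mem_drop hx
  set T := P.support.toFinset
  have hT : T ⊆ s := fun x hx ↦ hPs x (List.mem_toFinset.mp hx)
  have hclosed : ∀ x ∈ T, ∀ y ∈ s, G.Adj x y → y ∈ T := by
    simpa [T] using fun x hx y hy hxy ↦
      hP.mem_support_of_adj_of_forall_length_le hdeg hPs hmax hPk hx hy hxy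
  have hTcard : #T = P.length + 1 := by
    rw [List.toFinset_card_of_nodup hP.support_nodup, Walk.length_support]
  have hsum := sum_degreeIn_le_sum_sdiff_of_closed hT hclosed
  have hTdeg : #T * (#T - 1) ≤ (k - 1) * #T := by
    rw [mul_comm]
    gcongr
    omega
  rw [← card_sdiff_add_card_eq_card hT, mul_add] at h
  obtain ⟨u, w, p, hp, hlen, hps⟩ :=
    ih _ (sdiff_ssubset hT ⟨a, List.mem_toFinset.mpr P.start_mem_support⟩) (by omega)
  exact ⟨u, w, p, hp, hlen, fun x hx ↦ (mem_sdiff.mp (hps x hx)).1⟩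

end SimpleGraph

/-- Erdős–Gallai theorem, part 1: every simple graph on `n` vertices with more than
`(k-1)n/2` edges contains a path with `k` edges. -/
theorem stmt_0 {V : Type*} [Fintype V] [DecidableEq V] (G : SimpleGraph V)
    [DecidableRel G.Adj] (n k : ℕ) (hn : Fintype.card V = n)
    (he : ((k : ℝ) - 1) * n / 2 < G.edgeFinset.card) :
    ∃ (u v : V) (p : G.Walk u v), p.IsPath ∧ p.length = k := by
  rcases Nat.eq_zero_or_pos k with rfl | hk
  · obtain ⟨v⟩ : Nonempty V := by
      by_contra hV
      rw [not_nonempty_iff] at hV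
      simp [← hn, Subsingleton.elim G ⊥] at he
    exact ⟨v, v, .nil, .nil, rfl⟩
  have hsum : ∑ v, G.degreeIn univ v = 2 * #G.edgeFinset := by
    simpa [SimpleGraph.degreeIn, ← SimpleGraph.neighborFinset_eq_filter] using
      G.sum_degrees_eq_twice_card_edges
  have hedges : (k - 1) * n < 2 * #G.edgeFinset := by
    have : ((k - 1 : ℕ) : ℝ) * n < 2 * #G.edgeFinset := by
      push_cast [Nat.cast_sub hk]
      linarith
    exact_mod_cast this
  obtain ⟨u, v, p, hp, hlen, -⟩ := G.exists_isPath_length_eq_of_sum_degreeIn k univ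
    (by rwa [hsum, card_univ, hn])
  exact ⟨u, v, p, hp, hlen⟩
end

section
/- If X and Y are both good sets of a graph G and X ∩ Y ≠ ∅, then X ∪ Y is a good set of G. -/
/-!
Cycles, and paths between two vertices of the same set, pass from `G[X]` or `G[Y]` to
`G[X ∪ Y]` unchanged. For `u ∈ X` and `v ∈ Y \ X`, walk in `G[X]` from `u` towards a vertex
of `X ∩ Y` and stop at the first vertex `z` in `Y`; then `z ≠ v` because `z ∈ X`, and since
this initial segment meets `Y` only in `z`, following it by a long `z`–`v` path of `G[Y]`
gives a long `u`–`v` path of `G[X ∪ Y]`.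
-/

/-- `X ⊆ V(G)` is good (w.r.t. `k`) if every vertex of `X` lies on a cycle of length
at least `k/2` in `G[X]`, and any two distinct vertices of `X` are joined by a path
of length at least `k/2` in `G[X]`. -/
def Good {V : Type*} (G : SimpleGraph V) (k : ℕ) (X : Set V) : Prop :=
  (∀ u : X, ∃ c : (G.induce X).Walk u u, c.IsCycle ∧ k ≤ 2 * c.length) ∧
  (∀ u v : X, u ≠ v → ∃ p : (G.induce X).Walk u v, p.IsPath ∧ k ≤ 2 * p.length)

open SimpleGraph Walk

namespace SimpleGraph

variable {V : Type*} {G : SimpleGraph V} {u v w : V}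

lemma Walk.IsPath.append_of_forall_mem_support_eq {p : G.Walk u v} {q : G.Walk v w}
    (hp : p.IsPath) (hq : q.IsPath) (h : ∀ x ∈ p.support, x ∈ q.support → x = v) :
    (p.append q).IsPath := by
  have hq' := hq.support_nodup
  rw [← q.cons_tail_support, List.nodup_cons] at hq'
  rw [isPath_def, support_append]
  refine hp.support_nodup.append hq'.2 fun x hxp hxq => ?_
  obtain rfl := h x hxp (List.mem_of_mem_tail hxq)
  exact hq'.1 hxq

lemma Reachable.exists_isPath_to_first_mem {S : Set V} (h : G.Reachable u w) (hw : w ∈ S) :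
    ∃ z ∈ S, ∃ q : G.Walk u z, q.IsPath ∧ ∀ x ∈ q.support, x ∈ S → x = z := by
  classical
  obtain ⟨p⟩ := h
  suffices ∃ z ∈ S, ∃ q : G.Walk u z, ∀ x ∈ q.support, x ∈ S → x = z by
    obtain ⟨z, hz, q, hq⟩ := this
    exact ⟨z, hz, q.bypass, q.bypass_isPath,
      fun x hx => hq x (q.support_bypass_subset_support hx)⟩
  induction p with
  | nil => exact ⟨_, hw, .nil, by simp⟩
  | @cons a b c hab p ih =>
    by_cases ha : a ∈ S
    · exact ⟨a, ha, .nil, by simp⟩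
    · obtain ⟨z, hz, q, hq⟩ := ih hw
      refine ⟨z, hz, .cons hab q, ?_⟩
      simp only [support_cons, List.mem_cons, forall_eq_or_imp]
      exact ⟨fun ha' => absurd ha' ha, hq⟩

end SimpleGraph

section Good

variable {V : Type*} {G : SimpleGraph V} {k : ℕ} {X Y Z : Set V}

lemma Good.reachable (hX : Good G k X) (u v : X) : (G.induce X).Reachable u v := by
  obtain rfl | huv := eq_or_ne u v
  · rfl
  · obtain ⟨p, -⟩ := hX.2 u v huv
    exact ⟨p⟩

lemma Good.exists_isCycle_of_subset (hX : Good G k X) (hXZ : X ⊆ Z) (u : Z) (hu : u.1 ∈ X) :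
    ∃ c : (G.induce Z).Walk u u, c.IsCycle ∧ k ≤ 2 * c.length := by
  obtain ⟨c, hc, hk⟩ := hX.1 ⟨u, hu⟩
  exact ⟨c.map (G.induceHomOfLE hXZ).toHom, hc.map (G.induceHomOfLE hXZ).injective,
    hk.trans_eq (congrArg (2 * ·) (length_map ..).symm)⟩

lemma Good.exists_isPath_of_subset (hX : Good G k X) (hXZ : X ⊆ Z) (u v : Z) (hu : u.1 ∈ X)
    (hv : v.1 ∈ X) (huv : u ≠ v) :
    ∃ p : (G.induce Z).Walk u v, p.IsPath ∧ k ≤ 2 * p.length := by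
  obtain ⟨p, hp, hk⟩ := hX.2 ⟨u, hu⟩ ⟨v, hv⟩
    fun h => huv (Subtype.ext (Subtype.mk.inj h))
  exact ⟨p.map (G.induceHomOfLE hXZ).toHom, hp.map (G.induceHomOfLE hXZ).injective,
    hk.trans_eq (congrArg (2 * ·) (length_map ..).symm)⟩

lemma Good.exists_isPath_union_of_mem_diff (hX : Good G k X) (hY : Good G k Y)
    (hXY : (X ∩ Y).Nonempty) (u v : ↥(X ∪ Y)) (hu : u.1 ∈ X) (hv : v.1 ∈ Y \ X) :
    ∃ p : (G.induce (X ∪ Y)).Walk u v, p.IsPath ∧ k ≤ 2 * p.length := by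
  obtain ⟨w, hwX, hwY⟩ := hXY
  obtain ⟨hvY, hvX⟩ := hv
  obtain ⟨z, hzY, q, hq, hqY⟩ :=
    (hX.reachable ⟨u, hu⟩ ⟨w, hwX⟩).exists_isPath_to_first_mem (S := {x : X | x.1 ∈ Y}) hwY
  have hzv : (⟨z, hzY⟩ : Y) ≠ ⟨v, hvY⟩ := fun h => hvX (congrArg Subtype.val h ▸ z.2)
  obtain ⟨r, hr, hk⟩ := hY.2 _ _ hzv
  let f := G.induceHomOfLE (Set.subset_union_left : X ⊆ X ∪ Y)
  let g := G.induceHomOfLE (Set.subset_union_right : Y ⊆ X ∪ Y)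
  let q' := q.map f.toHom
  let r' : (G.induce (X ∪ Y)).Walk (f z) v :=
    (r.map g.toHom).copy (Subtype.ext rfl) (Subtype.ext rfl)
  have hmeet : ∀ x ∈ q'.support, x ∈ r'.support → x = f z := by
    simp only [q', r', support_copy, Walk.support_map, List.mem_map]
    rintro _ ⟨a, ha, rfl⟩ ⟨b, -, hba⟩
    have hba : b.1 = a.1 := congrArg Subtype.val hba
    obtain rfl : a = z := hqY a ha (show a.1 ∈ Y from hba ▸ b.2)
    rfl
  have hr' : r'.IsPath := (isPath_copy ..).mpr (hr.map g.injective)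
  have hp : (q'.append r').IsPath :=
    (hq.map f.injective).append_of_forall_mem_support_eq hr' hmeet
  have hlen : r.length ≤ (q'.append r').length := by
    simp only [q', r', length_append, length_copy, length_map]
    omega
  exact ⟨(q'.append r').copy (Subtype.ext rfl) rfl, (isPath_copy ..).mpr hp, by
    rw [length_copy]; omega⟩

end Good

/-- If `X` and `Y` are good sets with nonempty intersection, then `X ∪ Y` is good. -/
theorem stmt_2 {V : Type*} (G : SimpleGraph V) (k : ℕ) (X Y : Set V)
    (hX : Good G k X) (hY : Good G k Y) (hXY : (X ∩ Y).Nonempty) :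
    Good G k (X ∪ Y) := by
  refine ⟨fun u => ?_, fun u v huv => ?_⟩
  · rcases u.2 with hu | hu
    · exact hX.exists_isCycle_of_subset Set.subset_union_left u hu
    · exact hY.exists_isCycle_of_subset Set.subset_union_right u hu
  by_cases huX : u.1 ∈ X <;> by_cases hvX : v.1 ∈ X
  · exact hX.exists_isPath_of_subset Set.subset_union_left u v huX hvX huv
  · exact hX.exists_isPath_union_of_mem_diff hY hXY u v huX ⟨v.2.resolve_left hvX, hvX⟩
  · obtain ⟨p, hp, hk⟩ :=
      hX.exists_isPath_union_of_mem_diff hY hXY v u hvX ⟨u.2.resolve_left huX, huX⟩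
    exact ⟨p.reverse, hp.reverse, by rwa [length_reverse]⟩
  · exact hY.exists_isPath_of_subset Set.subset_union_right u v (u.2.resolve_left huX)
      (v.2.resolve_left hvX) huv
end

section
/- If X is a good set of G and P is a path in G whose both end vertices lie in X, then X ∪ V(P) is a good set of G. -/
namespace SimpleGraph.Walk

variable {V : Type*} {G : SimpleGraph V} {u v w : V}

lemma IsPath.start_notMem_tail_support {p : G.Walk u v} (hp : p.IsPath) :
    u ∉ p.support.tail :=
  (List.nodup_cons.1 (p.cons_tail_support ▸ hp.support_nodup)).1

lemma IsPath.eq_of_mem_support_of_mem_support_append {p : G.Walk u v} {q : G.Walk v w}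
    (hpq : (p.append q).IsPath) {a : V} (hp : a ∈ p.support) (hq : a ∈ q.support) : a = v := by
  by_contra h
  exact hpq.ne_of_mem_support_of_append h hp hq rfl

lemma IsPath.append_of_forall_mem {p : G.Walk u v} {q : G.Walk v w} (hp : p.IsPath)
    (hq : q.IsPath) (h : ∀ a ∈ p.support, a ∈ q.support → a = v) : (p.append q).IsPath := by
  rw [isPath_def, support_append, List.nodup_append]
  refine ⟨hp.support_nodup, hq.support_nodup.tail, fun a ha b hb hab => ?_⟩
  subst hab
  obtain rfl := h a ha (List.mem_of_mem_tail hb)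
  exact hq.start_notMem_tail_support hb

@[simp]
lemma mem_support_reverse {p : G.Walk u v} : w ∈ p.reverse.support ↔ w ∈ p.support := by
  rw [support_reverse, List.mem_reverse]

lemma one_lt_length_of_mem_support {p : G.Walk u v} (hw : w ∈ p.support) (hwu : w ≠ u)
    (hwv : w ≠ v) : 1 < p.length := by
  obtain ⟨a, b, rfl⟩ := p.mem_support_iff_exists_append.1 hw
  have ha : a.length ≠ 0 := fun h => hwu (eq_of_length_eq_zero h).symm
  have hb : b.length ≠ 0 := fun h => hwv (eq_of_length_eq_zero h)
  rw [length_append]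
  omega

variable {s : Set V}

lemma IsPath.induce {p : G.Walk u v} (hp : p.IsPath) (hs : ∀ a ∈ p.support, a ∈ s) :
    (p.induce s hs).IsPath := by
  rw [← isPath_map_iff_of_injective (f := (Embedding.induce (G := G) s).toHom)
    (Embedding.induce (G := G) s).injective, map_induce]
  exact hp

lemma IsCycle.induce {c : G.Walk u u} (hc : c.IsCycle) (hs : ∀ a ∈ c.support, a ∈ s) :
    (c.induce s hs).IsCycle := by
  rw [← isCycle_map_iff_of_injective (f := (Embedding.induce (G := G) s).toHom)
    (Embedding.induce (G := G) s).injective, map_induce]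
  exact hc

@[simp]
lemma length_induce (p : G.Walk u v) (hs : ∀ a ∈ p.support, a ∈ s) :
    (p.induce s hs).length = p.length := by
  have := congrArg length (map_induce p hs)
  rwa [length_map] at this

end SimpleGraph.Walk

open SimpleGraph Walk

section

variable {V : Type*} {G : SimpleGraph V} {k : ℕ} {X Y : Set V}

lemma good_iff : Good G k X ↔
    (∀ u ∈ X, ∃ (w : V) (c : G.Walk w w), c.IsCycle ∧ k ≤ 2 * c.length ∧ u ∈ c.support ∧
      ∀ a ∈ c.support, a ∈ X) ∧
    (∀ u ∈ X, ∀ v ∈ X, u ≠ v → ∃ p : G.Walk u v, p.IsPath ∧ k ≤ 2 * p.length ∧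
      ∀ a ∈ p.support, a ∈ X) := by
  have hsupp {u v : X} (p : (G.induce X).Walk u v) :
      ∀ a ∈ (p.map (Embedding.induce X).toHom).support, a ∈ X := by
    simp only [Walk.support_map, List.mem_map]
    rintro _ ⟨b, -, rfl⟩
    exact b.2
  have hinj := (Embedding.induce (G := G) X).injective
  constructor
  · rintro ⟨hcyc, hpath⟩
    refine ⟨fun u hu => ?_, fun u hu v hv huv => ?_⟩
    · obtain ⟨c, hc, hck⟩ := hcyc ⟨u, hu⟩
      exact ⟨u, c.map (Embedding.induce X).toHom, hc.map hinj,
        hck.trans_eq (congrArg (2 * ·) (length_map _ c).symm), start_mem_support _, hsupp c⟩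
    · obtain ⟨p, hp, hpk⟩ := hpath ⟨u, hu⟩ ⟨v, hv⟩ (by simpa using huv)
      exact ⟨p.map (Embedding.induce X).toHom, hp.map hinj,
        hpk.trans_eq (congrArg (2 * ·) (length_map _ p).symm), hsupp p⟩
  · rintro ⟨hcyc, hpath⟩
    refine ⟨fun ⟨u, hu⟩ => ?_, fun ⟨u, hu⟩ ⟨v, hv⟩ huv => ?_⟩
    · classical
      obtain ⟨w, c, hc, hck, huc, hcX⟩ := hcyc u hu
      have hrX : ∀ a ∈ (c.rotate u huc).support, a ∈ X := by simpa using hcX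
      exact ⟨(c.rotate u huc).induce X hrX, (hc.rotate huc).induce hrX, by simpa using hck⟩
    · obtain ⟨p, hp, hpk, hpX⟩ := hpath u hu v hv (by simpa using huv)
      exact ⟨p.induce X hpX, hp.induce hpX, by simpa using hpk⟩

lemma Good.exists_path_of_tails (hX : Good G k X) (hXY : X ⊆ Y) {u v e e' : V}
    {s : G.Walk u e} {t : G.Walk e' v} (hs : s.IsPath) (ht : t.IsPath) (he : e ∈ X)
    (he' : e' ∈ X) (hee' : e ≠ e') (hsX : ∀ a ∈ s.support, a ∈ X → a = e)
    (htX : ∀ a ∈ t.support, a ∈ X → a = e') (hst : ∀ a ∈ s.support, a ∉ t.support)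
    (hsY : ∀ a ∈ s.support, a ∈ Y) (htY : ∀ a ∈ t.support, a ∈ Y) :
    ∃ r : G.Walk u v, r.IsPath ∧ k ≤ 2 * r.length ∧ ∀ a ∈ r.support, a ∈ Y := by
  obtain ⟨q, hq, hqk, hqX⟩ := (good_iff.1 hX).2 e he e' he' hee'
  have hqt : (q.append t).IsPath :=
    hq.append_of_forall_mem ht fun a hq ht => htX a ht (hqX a hq)
  refine ⟨s.append (q.append t), hs.append_of_forall_mem hqt fun a hs hqt => ?_, ?_, ?_⟩
  · rcases (mem_support_append_iff _ _).1 hqt with hq | ht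
    exacts [hsX a hs (hqX a hq), (hst a hs ht).elim]
  · simp only [length_append]
    omega
  · simp only [mem_support_append_iff]
    rintro a (ha | ha | ha)
    exacts [hsY a ha, hXY (hqX a ha), htY a ha]

lemma Good.exists_path_of_tail (hX : Good G k X) (hXY : X ⊆ Y) {u e v : V}
    {s : G.Walk u e} (hs : s.IsPath) (he : e ∈ X) (hv : v ∈ X) (hev : e ≠ v)
    (hsX : ∀ a ∈ s.support, a ∈ X → a = e) (hsY : ∀ a ∈ s.support, a ∈ Y) :
    ∃ r : G.Walk u v, r.IsPath ∧ k ≤ 2 * r.length ∧ ∀ a ∈ r.support, a ∈ Y := by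
  refine hX.exists_path_of_tails hXY hs .nil he hv hev hsX
    (fun _ ha _ => List.mem_singleton.1 ha) (fun a ha hav => ?_) hsY
    (fun _ ha => List.mem_singleton.1 ha ▸ hXY hv)
  obtain rfl := List.mem_singleton.1 hav
  exact hev (hsX a ha hv).symm

lemma SimpleGraph.Walk.IsPath.eq_end_of_mem_ear_append {x u y : V} {a : G.Walk x u} {b : G.Walk u y}
    (hp : (a.append b).IsPath) (hear : ∀ v ∈ (a.append b).support, v ∈ X → v = x ∨ v = y)
    (hux : u ≠ x) (huy : u ≠ y) :
    (∀ w ∈ a.support, w ∈ X → w = x) ∧ (∀ w ∈ b.support, w ∈ X → w = y) := by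
  have hya : y ∉ a.support := fun h =>
    hp.ne_of_mem_support_of_append huy.symm h (end_mem_support b) rfl
  have hxb : x ∉ b.support := fun h =>
    hp.ne_of_mem_support_of_append hux.symm (start_mem_support a) h rfl
  refine ⟨fun w hw hwX => ?_, fun w hw hwX => ?_⟩
  · exact (hear w (support_subset_support_append_left a b hw) hwX).resolve_right
      fun h => hya (h ▸ hw)
  · exact (hear w (support_subset_support_append_right a b hw) hwX).resolve_left
      fun h => hxb (h ▸ hw)

lemma Good.exists_cycle_of_ear (hX : Good G k X) {x y : V} (hx : x ∈ X) (hy : y ∈ X)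
    (hxy : x ≠ y) {p : G.Walk x y} (hp : p.IsPath) (hlen : 1 < p.length)
    (hear : ∀ v ∈ p.support, v ∈ X → v = x ∨ v = y) :
    ∃ c : G.Walk x x, c.IsCycle ∧ k ≤ 2 * c.length ∧ (∀ a ∈ p.support, a ∈ c.support) ∧
      ∀ a ∈ c.support, a ∈ X ∪ {v | v ∈ p.support} := by
  obtain ⟨q, hq, hqk, hqX⟩ := (good_iff.1 hX).2 y hy x hx hxy.symm
  refine ⟨p.append q, hp.isCycle_append hq (fun a hap haq => ?_) (Or.inl hlen), ?_,
    fun a ha => (mem_support_append_iff _ _).2 (Or.inl ha), fun a ha => ?_⟩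
  · rcases hear a (List.mem_of_mem_tail hap) (hqX a (List.mem_of_mem_tail haq)) with rfl | rfl
    exacts [hp.start_notMem_tail_support hap, hq.start_notMem_tail_support haq]
  · rw [length_append]
    omega
  · rcases (mem_support_append_iff _ _).1 ha with ha | ha
    exacts [Or.inr ha, Or.inl (hqX a ha)]

lemma Good.exists_path_of_mem_ear (hX : Good G k X) {x y : V} (hx : x ∈ X) (hy : y ∈ X)
    (hxy : x ≠ y) {p : G.Walk x y} (hp : p.IsPath)
    (hear : ∀ v ∈ p.support, v ∈ X → v = x ∨ v = y) {u v : V} (hu : u ∈ p.support)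
    (huX : u ∉ X) (hv : v ∈ X ∪ {v | v ∈ p.support}) (huv : u ≠ v) :
    ∃ r : G.Walk u v, r.IsPath ∧ k ≤ 2 * r.length ∧
      ∀ a ∈ r.support, a ∈ X ∪ {v | v ∈ p.support} := by
  have hXY : X ⊆ X ∪ {v | v ∈ p.support} := Set.subset_union_left
  obtain ⟨a, b, ha, hb, rfl⟩ := hp.mem_support_iff_exists_append.1 hu
  obtain ⟨haX, hbX⟩ := hp.eq_end_of_mem_ear_append hear (huX <| · ▸ hx) (huX <| · ▸ hy)
  have haY : ∀ w ∈ a.support, w ∈ X ∪ {v | v ∈ (a.append b).support} :=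
    fun w hw => Or.inr (support_subset_support_append_left a b hw)
  have hbY : ∀ w ∈ b.support, w ∈ X ∪ {v | v ∈ (a.append b).support} :=
    fun w hw => Or.inr (support_subset_support_append_right a b hw)
  by_cases hvX : v ∈ X
  · by_cases hvx : v = x
    · subst hvx
      exact hX.exists_path_of_tail hXY hb hy hvX hxy.symm hbX hbY
    · exact hX.exists_path_of_tail hXY ha.reverse hx hvX (Ne.symm hvx) (by simpa using haX)
        (by simpa using haY)
  rcases (mem_support_append_iff _ _).1 (hv.resolve_left hvX) with hva | hvb
  · obtain ⟨a₁, a₂, ha₁, -, rfl⟩ := ha.mem_support_iff_exists_append.1 hva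
    have hsub := support_subset_support_append_left a₁ a₂
    have hua₁ : u ∉ a₁.support := fun h =>
      ha.ne_of_mem_support_of_append huv h (end_mem_support a₂) rfl
    exact hX.exists_path_of_tails hXY hb ha₁ hy hx hxy.symm hbX (fun w hw => haX w (hsub hw))
      (fun w hwb hwa => hua₁ (hp.eq_of_mem_support_of_mem_support_append (hsub hwa) hwb ▸ hwa))
      hbY (fun w hw => haY w (hsub hw))
  · obtain ⟨b₁, b₂, -, hb₂, rfl⟩ := hb.mem_support_iff_exists_append.1 hvb
    have hsub := support_subset_support_append_right b₁ b₂
    have hub₂ : u ∉ b₂.support := fun h =>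
      hb.ne_of_mem_support_of_append huv (start_mem_support b₁) h rfl
    refine hX.exists_path_of_tails hXY ha.reverse hb₂.reverse hx hy hxy ?_ ?_ ?_ ?_ ?_ <;>
      simp only [mem_support_reverse]
    · exact haX
    · exact fun w hw => hbX w (hsub hw)
    · exact fun w hwa hwb =>
        hub₂ (hp.eq_of_mem_support_of_mem_support_append hwa (hsub hwb) ▸ hwb)
    · exact haY
    · exact fun w hw => hbY w (hsub hw)

lemma Good.union_support_of_ear (hX : Good G k X) {x y : V} (hx : x ∈ X) (hy : y ∈ X)
    {p : G.Walk x y} (hp : p.IsPath) (hear : ∀ v ∈ p.support, v ∈ X → v = x ∨ v = y) :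
    Good G k (X ∪ {v | v ∈ p.support}) := by
  by_cases hsub : {v | v ∈ p.support} ⊆ X
  · rwa [Set.union_eq_left.2 hsub]
  obtain ⟨z, hzp, hzX⟩ := Set.not_subset.1 hsub
  have hzx : z ≠ x := fun h => hzX (h ▸ hx)
  have hxy : x ≠ y := by
    rintro rfl
    simp [nil_iff_support_eq.1 (isPath_iff_nil.1 hp), hzx] at hzp
  have hlen := one_lt_length_of_mem_support hzp hzx fun h => hzX (h ▸ hy)
  obtain ⟨c, hc, hck, hpc, hcY⟩ := hX.exists_cycle_of_ear hx hy hxy hp hlen hear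
  obtain ⟨hcyc, hpath⟩ := good_iff.1 hX
  refine good_iff.2 ⟨fun u hu => ?_, fun u hu v hv huv => ?_⟩
  · by_cases huX : u ∈ X
    · obtain ⟨w, c, hc, hck, huc, hcX⟩ := hcyc u huX
      exact ⟨w, c, hc, hck, huc, fun a ha => Or.inl (hcX a ha)⟩
    · exact ⟨x, c, hc, hck, hpc u (hu.resolve_left huX), hcY⟩
  · by_cases huX : u ∈ X
    · by_cases hvX : v ∈ X
      · obtain ⟨r, hr, hrk, hrX⟩ := hpath u huX v hvX huv
        exact ⟨r, hr, hrk, fun a ha => Or.inl (hrX a ha)⟩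
      · obtain ⟨r, hr, hrk, hrY⟩ :=
          hX.exists_path_of_mem_ear hx hy hxy hp hear (hv.resolve_left hvX) hvX hu huv.symm
        exact ⟨r.reverse, hr.reverse, by rwa [length_reverse], by simpa using hrY⟩
    · exact hX.exists_path_of_mem_ear hx hy hxy hp hear (hu.resolve_left huX) huX hv huv

lemma Good.union_support (hX : Good G k X) {x y : V} (hx : x ∈ X) (hy : y ∈ X)
    {p : G.Walk x y} (hp : p.IsPath) : Good G k (X ∪ {v | v ∈ p.support}) := by
  induction hn : p.length using Nat.strong_induction_on generalizing X x y with
  | _ n ih =>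
  by_cases hmid : ∃ w ∈ p.support, w ∈ X ∧ w ≠ x ∧ w ≠ y
  · obtain ⟨w, hwp, hwX, hwx, hwy⟩ := hmid
    obtain ⟨a, b, ha, hb, rfl⟩ := hp.mem_support_iff_exists_append.1 hwp
    have hal : a.length ≠ 0 := fun h => hwx (eq_of_length_eq_zero h).symm
    have hbl : b.length ≠ 0 := fun h => hwy (eq_of_length_eq_zero h)
    rw [length_append] at hn
    have hXa := ih a.length (by omega) hX hx hwX ha rfl
    convert ih b.length (by omega) hXa (Or.inl hwX) (Or.inl hy) hb rfl using 1
    ext v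
    simp only [Set.mem_union, Set.mem_ofPred_eq, mem_support_append_iff, or_assoc]
  · push Not at hmid
    exact hX.union_support_of_ear hx hy hp fun v hv hvX => or_iff_not_imp_left.2 (hmid v hv hvX)

end

/-- If `X` is good and `P` is a path in `G` with both end vertices in `X`,
then `X ∪ V(P)` is good. -/
theorem stmt_3 {V : Type*} (G : SimpleGraph V) (k : ℕ) (X : Set V)
    (hX : Good G k X) (x y : V) (hx : x ∈ X) (hy : y ∈ X)
    (p : G.Walk x y) (hp : p.IsPath) :
    Good G k (X ∪ {v | v ∈ p.support}) :=
  hX.union_support hx hy hp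
end

section
/- Let C be a cycle of length at least k in G and let H(C) be a good set containing V(C) that is maximal (under inclusion) among good sets. Then |H(C)| ≥ k, and no two distinct vertices of H(C) have a common neighbour outside H(C). -/
open SimpleGraph in
/-- If `C` is a cycle of length at least `k` and `H` is a maximal good set containing
`V(C)`, then `|H| ≥ k` and no two distinct vertices of `H` have a common neighbour
outside `H`. -/
theorem stmt_5 {V : Type*} [Fintype V] (G : SimpleGraph V) (k : ℕ)
    (u : V) (c : G.Walk u u) (hc : c.IsCycle) (hk : k ≤ c.length)
    (H : Set V) (hH : Good G k H) (hCH : {v | v ∈ c.support} ⊆ H)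
    (hmax : ∀ H' : Set V, Good G k H' → H ⊆ H' → H' = H) :
    k ≤ H.ncard ∧
      ∀ x ∈ H, ∀ y ∈ H, x ≠ y → ∀ z ∉ H, ¬(G.Adj x z ∧ G.Adj y z) := by
  classical
  constructor
  · -- cardinality part
    have hsub : {v | v ∈ c.support.tail} ⊆ H := fun v hv => hCH (List.mem_of_mem_tail hv)
    have hnd : c.support.tail.Nodup := hc.support_nodup
    have hcard : {v | v ∈ c.support.tail}.ncard = c.length := by
      have h1 : {v | v ∈ c.support.tail} = ↑c.support.tail.toFinset := by
        ext v; simp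
      rw [h1, Set.ncard_coe_finset, List.toFinset_card_of_nodup hnd, List.length_tail,
        c.length_support]
      omega
    calc k ≤ c.length := hk
      _ = _ := hcard.symm
      _ ≤ H.ncard := Set.ncard_le_ncard hsub (Set.toFinite H)
  · rintro x hx y hy hxy z hz ⟨hxz, hyz⟩
    have valeq : ∀ {s : Set V} {a b : ↥s}, a = b → (a : V) = b := fun h => by rw [h]
    set H' : Set V := H ∪ {z} with hH'def
    have hHH' : H ⊆ H' := Set.subset_union_left
    let f : G.induce H →g G.induce H' := ⟨fun a => ⟨a.1, Or.inl a.2⟩, fun h => h⟩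
    have hf : Function.Injective f := by
      intro a b h
      have h2 : ((f a : ↥H') : V) = ((f b : ↥H') : V) := valeq h
      exact Subtype.ext h2
    have hzH' : z ∈ H' := Or.inr rfl
    set z' : H' := ⟨z, hzH'⟩ with hz'def
    set x' : H' := ⟨x, Or.inl hx⟩ with hx'def
    set y' : H' := ⟨y, Or.inl hy⟩ with hy'def
    have hz'x' : z' ≠ x' := by
      intro h; apply hz; rw [show z = x from congrArg Subtype.val h]; exact hx
    have hz'y' : z' ≠ y' := by
      intro h; apply hz; rw [show z = y from congrArg Subtype.val h]; exact hy
    have hax : (G.induce H').Adj x' z' := hxz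
    have hay : (G.induce H').Adj y' z' := hyz
    -- z' not in the support of walks mapped from H
    have hznot : ∀ {a b : ↥H} (p : (G.induce H).Walk a b), z' ∉ (p.map f).support := by
      intro a b p hmem
      rw [SimpleGraph.Walk.support_map] at hmem
      obtain ⟨w, _, hw⟩ := List.mem_map.mp hmem
      apply hz
      rw [← show (f w).1 = z from congrArg Subtype.val hw]
      exact w.2
    have pathStep : ∀ {a b : ↥H} (p : (G.induce H).Walk a b) (hp : p.IsPath)
        (h : (G.induce H').Adj (f b) z'), ((p.map f).concat h).IsPath := by
      intro a b p hp h
      have h1 : ((p.map f).concat h).reverse.IsPath := by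
        rw [SimpleGraph.Walk.reverse_concat]
        rw [SimpleGraph.Walk.cons_isPath_iff]
        refine ⟨(SimpleGraph.Walk.map_isPath_of_injective hf hp).reverse, ?_⟩
        rw [SimpleGraph.Walk.support_reverse, List.mem_reverse]
        exact hznot p
      exact (SimpleGraph.Walk.isPath_reverse_iff _).mp h1
    -- a long path from any vertex of H to z' inside H'
    have pathToZ : ∀ (v : V) (hv : v ∈ H),
        ∃ p : (G.induce H').Walk ⟨v, Or.inl hv⟩ z', p.IsPath ∧ k ≤ 2 * p.length := by
      intro v hv
      by_cases hvx : v = x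
      · subst hvx
        have hne : (⟨v, hv⟩ : ↥H) ≠ ⟨y, hy⟩ := by
          intro h; exact hxy (valeq h)
        obtain ⟨p, hp, hlen⟩ := hH.2 ⟨v, hv⟩ ⟨y, hy⟩ hne
        refine ⟨(p.map f).concat hay, pathStep p hp hay, ?_⟩
        rw [SimpleGraph.Walk.length_concat, SimpleGraph.Walk.length_map]
        omega
      · have hne : (⟨v, hv⟩ : ↥H) ≠ ⟨x, hx⟩ := by
          intro h; exact hvx (valeq h)
        obtain ⟨p, hp, hlen⟩ := hH.2 ⟨v, hv⟩ ⟨x, hx⟩ hne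
        refine ⟨(p.map f).concat hax, pathStep p hp hax, ?_⟩
        rw [SimpleGraph.Walk.length_concat, SimpleGraph.Walk.length_map]
        omega
    -- H' is good
    have hgood : Good G k H' := by
      constructor
      · rintro ⟨v, hv | hv⟩
        · obtain ⟨cc, hcc, hlen⟩ := hH.1 ⟨v, hv⟩
          exact ⟨cc.map f, hcc.map hf, by rwa [SimpleGraph.Walk.length_map]⟩
        · -- v = z
          rcases hv with rfl
          have hne : (⟨x, hx⟩ : ↥H) ≠ ⟨y, hy⟩ := by
            intro h; exact hxy (valeq h)
          obtain ⟨p, hp, hlen⟩ := hH.2 ⟨x, hx⟩ ⟨y, hy⟩ hne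
          refine ⟨SimpleGraph.Walk.cons hax.symm ((p.map f).concat hay), ?_, ?_⟩
          · rw [SimpleGraph.Walk.cons_isCycle_iff]
            refine ⟨pathStep p hp hay, ?_⟩
            intro hmem
            rw [SimpleGraph.Walk.edges_concat, List.concat_eq_append, List.mem_append] at hmem
            rcases hmem with hmem | hmem
            · exact hznot p (SimpleGraph.Walk.fst_mem_support_of_mem_edges _ hmem)
            · rw [List.mem_singleton, Sym2.eq_iff] at hmem
              rcases hmem with ⟨h1, h2⟩ | ⟨h1, h2⟩
              · have hvy : _root_.id (Subtype.val _) = y := valeq h1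
                exact hz (by rw [← hvy] at hy; exact hy)
              · exact hxy (valeq h2)
          · rw [SimpleGraph.Walk.length_cons, SimpleGraph.Walk.length_concat,
              SimpleGraph.Walk.length_map]
            omega
      · rintro ⟨a, ha | ha⟩ ⟨b, hb | hb⟩ hab
        · have hne : (⟨a, ha⟩ : ↥H) ≠ ⟨b, hb⟩ := by
            intro h
            have h2 : ((⟨a, ha⟩ : ↥H) : V) = ((⟨b, hb⟩ : ↥H) : V) := valeq h
            exact hab (Subtype.ext h2)
          obtain ⟨p, hp, hlen⟩ := hH.2 ⟨a, ha⟩ ⟨b, hb⟩ hne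
          exact ⟨p.map f, SimpleGraph.Walk.map_isPath_of_injective hf hp, by rwa [SimpleGraph.Walk.length_map]⟩
        · rcases hb with rfl
          exact pathToZ a ha
        · rcases ha with rfl
          obtain ⟨p, hp, hlen⟩ := pathToZ b hb
          exact ⟨p.reverse, hp.reverse, by rwa [SimpleGraph.Walk.length_reverse]⟩
        · exact absurd (Subtype.ext (ha.trans hb.symm)) hab
    have := hmax H' hgood hHH'
    apply hz
    rw [← this]
    exact hzH'
end

section
/- Let G be a simple graph containing a cycle C of length at least k/2 through a vertex u with deg_G(u) ≥ k-1, and let k/2 ≤ r ≤ k-3. If u has at least r neighbours outside V(C), then G contains a keyring with r leaves and at least k edges. -/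
/-- `G` contains a keyring with `r` leaves and at least `k` edges: a cycle with `r`
pendant vertices (outside the cycle) attached to one of its vertices, with
`cycle length + r ≥ k` edges in total. -/
def HasKeyring {V : Type*} [DecidableEq V] (G : SimpleGraph V) (r k : ℕ) : Prop :=
  ∃ (u : V) (c : G.Walk u u) (L : Finset V), c.IsCycle ∧ L.card = r ∧
    (∀ v ∈ L, G.Adj u v ∧ v ∉ c.support) ∧ k ≤ c.length + r

/-- If `G` has a cycle of length at least `k/2` through a vertex `u` of degree at
least `k-1`, `k/2 ≤ r ≤ k-3`, and `u` has at least `r` neighbours outside the cycle,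
then `G` contains a keyring with `r` leaves and at least `k` edges. -/
theorem stmt_14 {V : Type*} [Fintype V] [DecidableEq V] (G : SimpleGraph V)
    [DecidableRel G.Adj] (k r : ℕ) (u : V) (c : G.Walk u u)
    (hc : c.IsCycle) (hlen : k ≤ 2 * c.length)
    (hdeg : k - 1 ≤ G.degree u)
    (hr₁ : k ≤ 2 * r) (hr₂ : r + 3 ≤ k)
    (hout : r ≤ {v : V | G.Adj u v ∧ v ∉ c.support}.ncard) :
    HasKeyring G r k := by
  classical
  have hfin : {v : V | G.Adj u v ∧ v ∉ c.support}.Finite := Set.toFinite _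
  rw [Set.ncard_eq_toFinset_card' _ ] at hout
  obtain ⟨L, hLsub, hLcard⟩ := Finset.exists_subset_card_eq hout
  refine ⟨u, c, L, hc, hLcard, ?_, by omega⟩
  intro v hv
  have := hLsub hv
  simpa using this
end

section
/- Let G be a simple graph with pairwise disjoint vertex sets H₁, …, H_m such that each G[H_i] is connected, and let G' be the graph obtained from G by contracting each H_i to a single vertex (keeping the remaining vertices and all edges between distinct parts, without multiplicities). If G' contains a cycle of length at least k, then G contains a cycle of length at least k that is not contained in any single H_i. -/
/-!
Send every vertex of `G` to the vertex of `G'` it is contracted to. The fibres of this map are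
connected, so a path of `G'` lifts to a path of `G` between any two prescribed points of its end
fibres: cross each fibre inside it and each edge of `G'` along a `G`-edge realizing it. Distinct
fibres are disjoint, so the lift is again a path, and it is at least as long. For a cycle
`x, r, …, x` of `G'`, closing the lift `b → a` of its path `r → x` by a `G`-edge `ab`
realizing `xr` gives a cycle of `G`; it meets the two distinct fibres over `x` and `r`, so it
lies in no single `H i`.
-/

namespace SimpleGraph

variable {V W : Type*} {G : SimpleGraph V} {G' : SimpleGraph W}

theorem Preconnected.exists_isPath_of_induce {s : Set V} (hs : (G.induce s).Preconnected)
    {a b : V} (ha : a ∈ s) (hb : b ∈ s) :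
    ∃ p : G.Walk a b, p.IsPath ∧ ∀ v ∈ p.support, v ∈ s := by
  classical
  obtain ⟨q⟩ := hs ⟨a, ha⟩ ⟨b, hb⟩
  refine ⟨(q.map (Embedding.induce s).toHom).toPath.1, (Walk.toPath _).2, fun v hv => ?_⟩
  obtain ⟨v', -, rfl⟩ := List.mem_map.mp <|
    Walk.support_map _ q ▸ Walk.support_toPath_subset_support _ hv
  exact v'.2

section Lift

variable {f : V → W}

theorem Walk.IsPath.exists_isPath_lift (hfib : ∀ w, (G.induce (f ⁻¹' {w})).Preconnected)
    (hlift : ∀ {s t}, G'.Adj s t → ∃ a b, f a = s ∧ f b = t ∧ G.Adj a b)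
    {s t : W} {p : G'.Walk s t} (hp : p.IsPath)
    {a b : V} (ha : f a = s) (hb : f b = t) :
    ∃ q : G.Walk a b, q.IsPath ∧ p.length ≤ q.length ∧
      ∀ v ∈ q.support, f v ∈ p.support := by
  induction p generalizing a with
  | nil =>
    obtain ⟨q, hq, hqs⟩ := (hfib _).exists_isPath_of_induce ha hb
    exact ⟨q, hq, Nat.zero_le _, fun v hv => by simpa using hqs v hv⟩
  | @cons s s' t h p' ih =>
    obtain ⟨hp', hs⟩ := Walk.cons_isPath_iff h p' |>.mp hp
    obtain ⟨a', b', ha', hb', hab'⟩ := hlift h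
    obtain ⟨Q, hQ, hQs⟩ := (hfib s).exists_isPath_of_induce ha ha'
    obtain ⟨P, hP, hlen, hPs⟩ := ih hp' hb' hb
    refine ⟨Q.append (.cons hab' P), ?_, ?_, ?_⟩
    · rw [Walk.isPath_def, Walk.support_append, Walk.support_cons, List.tail_cons,
        List.nodup_append']
      exact ⟨hQ.support_nodup, hP.support_nodup,
        fun v hvQ hvP => hs ((hQs v hvQ : f v = s) ▸ hPs v hvP)⟩
    · simp only [Walk.length_append, Walk.length_cons]
      omega
    · intro v hv
      rw [Walk.mem_support_append_iff, Walk.support_cons, List.mem_cons] at hv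
      rcases hv with hv | rfl | hv
      · rw [show f v = s from hQs v hv]; exact Walk.start_mem_support _
      · rw [ha']; exact Walk.start_mem_support _
      · simp [hPs v hv]

theorem Walk.IsCycle.exists_isCycle_lift (hfib : ∀ w, (G.induce (f ⁻¹' {w})).Preconnected)
    (hlift : ∀ {s t}, G'.Adj s t → ∃ a b, f a = s ∧ f b = t ∧ G.Adj a b)
    {x : W} {c' : G'.Walk x x} (hc' : c'.IsCycle) :
    ∃ (u : V) (c : G.Walk u u), c.IsCycle ∧ c'.length ≤ c.length ∧
      ∃ a ∈ c.support, ∃ b ∈ c.support, f a ≠ f b := by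
  cases c' with
  | nil => exact absurd hc' Walk.not_isCycle_nil
  | cons h p =>
    have hlen := hc'.three_le_length
    obtain ⟨hp, -⟩ := (Walk.cons_isCycle_iff p h).mp hc'
    obtain ⟨a, b, ha, hb, hab⟩ := hlift h
    obtain ⟨q, hq, hpq, -⟩ := hp.exists_isPath_lift hfib hlift hb ha
    rw [Walk.length_cons] at hlen ⊢
    refine ⟨a, .cons hab q, (Walk.cons_isCycle_iff q hab).mpr ⟨hq, fun he => ?_⟩, by simpa,
      a, by simp, b, by simp, ha ▸ hb ▸ h.ne⟩
    have := hq.length_eq_one_of_mem_edges (Sym2.eq_swap ▸ he)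
    omega

end Lift

end SimpleGraph

section Contraction

variable {V : Type*} {m : ℕ} {H : Fin m → Set V}

open Classical in
noncomputable def contractionMap (H : Fin m → Set V) (v : V) :
    Fin m ⊕ {v : V // ∀ i, v ∉ H i} :=
  if h : ∃ i, v ∈ H i then .inl h.choose else .inr ⟨v, not_exists.mp h⟩

theorem contractionMap_eq_inl_iff (hdisj : ∀ i j, i ≠ j → H i ∩ H j = ∅)
    {v : V} {i : Fin m} :
    contractionMap H v = .inl i ↔ v ∈ H i := by
  unfold contractionMap
  split_ifs with h
  · refine ⟨fun hi => Sum.inl_injective hi ▸ h.choose_spec, fun hv => ?_⟩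
    by_contra hne
    exact (hdisj _ _ (fun e => hne (congrArg Sum.inl e))).subset ⟨h.choose_spec, hv⟩
  · exact iff_of_false not_false fun hv => h ⟨i, hv⟩

theorem contractionMap_eq_inr_iff {v : V} {w : {v : V // ∀ i, v ∉ H i}} :
    contractionMap H v = .inr w ↔ v = w.1 := by
  unfold contractionMap
  split_ifs with h
  · exact iff_of_false not_false fun hv => h.elim (hv ▸ w.2)
  · simp [Subtype.ext_iff]

theorem preconnected_induce_contractionMap_fiber {G : SimpleGraph V}
    (hdisj : ∀ i j, i ≠ j → H i ∩ H j = ∅) (hconn : ∀ i, (G.induce (H i)).Connected)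
    (s : Fin m ⊕ {v : V // ∀ i, v ∉ H i}) :
    (G.induce (contractionMap H ⁻¹' {s})).Preconnected := by
  cases s with
  | inl i =>
    rw [show contractionMap H ⁻¹' {.inl i} = H i from
      Set.ext fun _ => contractionMap_eq_inl_iff hdisj]
    exact (hconn i).preconnected
  | inr w =>
    rw [show contractionMap H ⁻¹' {.inr w} = {w.1} from
      Set.ext fun _ => contractionMap_eq_inr_iff]
    exact .of_subsingleton

theorem exists_adj_of_adj_contraction {G : SimpleGraph V}
    (hdisj : ∀ i j, i ≠ j → H i ∩ H j = ∅)
    {G' : SimpleGraph (Fin m ⊕ {v : V // ∀ i, v ∉ H i})}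
    (hadj₁ : ∀ i j : Fin m, G'.Adj (Sum.inl i) (Sum.inl j) →
      ∃ a ∈ H i, ∃ b ∈ H j, G.Adj a b)
    (hadj₂ : ∀ (i : Fin m) (v : {v : V // ∀ i, v ∉ H i}),
      G'.Adj (Sum.inl i) (Sum.inr v) → ∃ a ∈ H i, G.Adj a v.1)
    (hadj₃ : ∀ v w : {v : V // ∀ i, v ∉ H i},
      G'.Adj (Sum.inr v) (Sum.inr w) → G.Adj v.1 w.1)
    {s t : Fin m ⊕ {v : V // ∀ i, v ∉ H i}} (h : G'.Adj s t) :
    ∃ a b, contractionMap H a = s ∧ contractionMap H b = t ∧ G.Adj a b := by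
  have hinl {a i} (ha : a ∈ H i) := (contractionMap_eq_inl_iff hdisj).mpr ha
  have hinr (w : {v : V // ∀ i, v ∉ H i}) := contractionMap_eq_inr_iff.mpr (rfl : w.1 = w.1)
  cases s with
  | inl i =>
    cases t with
    | inl j =>
      obtain ⟨a, ha, b, hb, hab⟩ := hadj₁ i j h
      exact ⟨a, b, hinl ha, hinl hb, hab⟩
    | inr w =>
      obtain ⟨a, ha, hab⟩ := hadj₂ i w h
      exact ⟨a, w.1, hinl ha, hinr w, hab⟩
  | inr w =>
    cases t with
    | inl j =>
      obtain ⟨a, ha, hab⟩ := hadj₂ j w h.symm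
      exact ⟨w.1, a, hinr w, hinl ha, hab.symm⟩
    | inr w' => exact ⟨w.1, w'.1, hinr w, hinr w', hadj₃ w w' h⟩

end Contraction

/-- Let `H₁, …, H_m` be pairwise disjoint vertex sets of `G`, each inducing a
connected subgraph, and let `G'` be the simple graph obtained by contracting each
`H i` to a single vertex (keeping the remaining vertices, edges inherited from `G`
without multiplicities). If `G'` contains a cycle of length at least `k`, then `G`
contains a cycle of length at least `k` not contained in any single `H i`. -/
theorem stmt_15 {V : Type*} (G : SimpleGraph V) (k m : ℕ)
    (H : Fin m → Set V)
    (hdisj : ∀ i j, i ≠ j → H i ∩ H j = ∅)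
    (hconn : ∀ i, (G.induce (H i)).Connected)
    (G' : SimpleGraph (Fin m ⊕ {v : V // ∀ i, v ∉ H i}))
    (hadj₁ : ∀ i j : Fin m, G'.Adj (Sum.inl i) (Sum.inl j) ↔
      (i ≠ j ∧ ∃ a ∈ H i, ∃ b ∈ H j, G.Adj a b))
    (hadj₂ : ∀ (i : Fin m) (v : {v : V // ∀ i, v ∉ H i}),
      G'.Adj (Sum.inl i) (Sum.inr v) ↔ ∃ a ∈ H i, G.Adj a v.1)
    (hadj₃ : ∀ v w : {v : V // ∀ i, v ∉ H i},
      G'.Adj (Sum.inr v) (Sum.inr w) ↔ G.Adj v.1 w.1)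
    (x : Fin m ⊕ {v : V // ∀ i, v ∉ H i}) (c' : G'.Walk x x)
    (hc' : c'.IsCycle) (hk' : k ≤ c'.length) :
    ∃ (u : V) (c : G.Walk u u), c.IsCycle ∧ k ≤ c.length ∧
      ¬∃ i : Fin m, ∀ v ∈ c.support, v ∈ H i := by
  obtain ⟨u, c, hc, hlen, a, ha, b, hb, hab⟩ := hc'.exists_isCycle_lift
    (preconnected_induce_contractionMap_fiber hdisj hconn)
    (exists_adj_of_adj_contraction hdisj (fun i j h => ((hadj₁ i j).mp h).2)
      (fun i v => (hadj₂ i v).mp) (fun v w => (hadj₃ v w).mp))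
  refine ⟨u, c, hc, hk'.trans hlen, fun ⟨i, hi⟩ => hab ?_⟩
  rw [(contractionMap_eq_inl_iff hdisj).mpr (hi a ha),
    (contractionMap_eq_inl_iff hdisj).mpr (hi b hb)]
end
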